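/- Let d ≥ 2 and fix images x₁⁽ⁱ⁾, x₁⁽ʲ⁾ ∈ ℝ^d. Let μ be the product measure on ℝ^d of d copies of the standard Gaussian measure N(0,1). Then the set { (z, w) ∈ ℝ^d × ℝ^d : there exists t ∈ (0,1) with t·x₁⁽ⁱ⁾ + (1−t)·z = t·x₁⁽ʲ⁾ + (1−t)·w } has measure zero under the product measure μ ⊗ μ. In other words, if the noises X₀⁽ⁱ⁾, X₀⁽ʲ⁾ are independent d-dimensional standard Gaussian vectors, the probability that the two straight interpolation trajectories cross at some time t ∈ (0,1) is zero. -/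

import Mathlib

/-!
If the trajectories from `(z, w)` cross at a time `t < 1`, then `(1 - t) • (z - w)` is a multiple
of `x₁j - x₁i`. Since `d ≥ 2`, some nonzero linear form `L` kills `x₁j - x₁i`, so every crossing
pair satisfies `L z = L w`. The law of `L` under the standard Gaussian is the nondegenerate
Gaussian `N(0, ‖L‖²)`, which has no atoms, so by Fubini the set `{L z = L w}` is null.
-/

open MeasureTheory ProbabilityTheory

/-- The law of a `d`-dimensional standard Gaussian vector: the product of `d`
independent standard Gaussians `N(0,1)`, viewed as a measure on `EuclideanSpace ℝ (Fin d)`. -/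
noncomputable def stdGaussian (d : ℕ) : Measure (EuclideanSpace ℝ (Fin d)) :=
  (Measure.pi fun _ : Fin d => gaussianReal 0 1).map
    (MeasurableEquiv.toLp 2 (Fin d → ℝ))

theorem LinearMap.apply_eq_apply_of_interpolation_eq {E F : Type*} [AddCommGroup E]
    [Module ℝ E] [AddCommGroup F] [Module ℝ F] (f : E →ₗ[ℝ] F) {a b z w : E} (hab : f a = f b)
    {t : ℝ} (ht : t ≠ 1) (h : t • a + (1 - t) • z = t • b + (1 - t) • w) : f z = f w := by
  have h' := congrArg f h
  simp only [map_add, map_smul, hab, add_right_inj] at h'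
  exact smul_right_injective F (sub_ne_zero.2 ht.symm) h'

theorem exists_strongDual_ne_zero_apply_eq_zero {E : Type*} [NormedAddCommGroup E]
    [NormedSpace ℝ E] [FiniteDimensional ℝ E] (hE : 2 ≤ Module.finrank ℝ E) (v : E) :
    ∃ L : StrongDual ℝ E, L ≠ 0 ∧ L v = 0 := by
  have hv : ℝ ∙ v < ⊤ := by
    refine Submodule.lt_top_of_finrank_lt_finrank ?_
    calc Module.finrank ℝ (ℝ ∙ v) ≤ 1 := by simpa using finrank_span_le_card ({v} : Set E)
      _ < Module.finrank ℝ E := hE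
  obtain ⟨f, hf0, hfv⟩ := Submodule.exists_dual_map_eq_bot_of_lt_top hv inferInstance
  refine ⟨LinearMap.toContinuousLinearMap f, by simpa using hf0, ?_⟩
  simpa [Submodule.map_span, Set.image_singleton] using hfv

theorem MeasureTheory.Measure.prod_setOf_apply_eq_apply_eq_zero {α β γ : Type*}
    [MeasurableSpace α] [MeasurableSpace β] [MeasurableSpace γ] [MeasurableEq γ]
    (μ : Measure α) (ν : Measure β) [SFinite ν] {f : α → γ} {g : β → γ}
    (hf : Measurable f) (hg : Measurable g) (hν : ∀ c, ν (g ⁻¹' {c}) = 0) :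
    μ.prod ν {p | f p.1 = g p.2} = 0 := by
  have hs : MeasurableSet {p : α × β | f p.1 = g p.2} :=
    measurableSet_eq_fun (hf.comp measurable_fst) (hg.comp measurable_snd)
  rw [Measure.measure_prod_null hs]
  refine Filter.Eventually.of_forall fun x => ?_
  simpa [Set.preimage, eq_comm] using hν (f x)

namespace ProbabilityTheory

variable {E : Type*} [NormedAddCommGroup E] [InnerProductSpace ℝ E] [FiniteDimensional ℝ E]
  [MeasurableSpace E] [BorelSpace E]

theorem map_strongDual_stdGaussian (L : StrongDual ℝ E) :
    (stdGaussian E).map L = gaussianReal 0 (‖L‖ ^ 2).toNNReal := by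
  rw [IsGaussian.map_eq_gaussianReal, integral_strongDual_stdGaussian, variance_dual_stdGaussian]

theorem stdGaussian_preimage_singleton_eq_zero {L : StrongDual ℝ E} (hL : L ≠ 0) (c : ℝ) :
    stdGaussian E (L ⁻¹' {c}) = 0 := by
  have : NullSingletonClass (gaussianReal 0 (‖L‖ ^ 2).toNNReal) :=
    nullSingletonClass_gaussianReal (by simpa using hL)
  rw [← Measure.map_apply L.measurable (measurableSet_singleton c), map_strongDual_stdGaussian,
    measure_singleton]

end ProbabilityTheory

theorem stdGaussian_eq_stdGaussian_euclideanSpace (d : ℕ) :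
    stdGaussian d = ProbabilityTheory.stdGaussian (EuclideanSpace ℝ (Fin d)) :=
  map_pi_eq_stdGaussian

/-- for `d ≥ 2` and fixed images `x₁⁽ⁱ⁾, x₁⁽ʲ⁾`, the set of pairs of noises
`(z, w)` whose straight interpolation trajectories cross at some time `t ∈ (0,1)` has
measure zero under the product of two `d`-dimensional standard Gaussian measures. -/
theorem crossing_at_some_time_measure_zero {d : ℕ} (hd : 2 ≤ d)
    (x₁i x₁j : EuclideanSpace ℝ (Fin d)) :
    ((stdGaussian d).prod (stdGaussian d))
      {p : EuclideanSpace ℝ (Fin d) × EuclideanSpace ℝ (Fin d) |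
        ∃ t ∈ Set.Ioo (0 : ℝ) 1,
          t • x₁i + (1 - t) • p.1 = t • x₁j + (1 - t) • p.2} = 0 := by
  obtain ⟨L, hL0, hL⟩ :=
    exists_strongDual_ne_zero_apply_eq_zero (by simpa using hd) (x₁i - x₁j)
  have hLij : L x₁i = L x₁j := sub_eq_zero.1 (by simpa using hL)
  refine measure_mono_null (t := {p | L p.1 = L p.2}) (fun p ⟨t, ht, h⟩ =>
    (L : EuclideanSpace ℝ (Fin d) →ₗ[ℝ] ℝ).apply_eq_apply_of_interpolation_eq hLij ht.2.ne h) ?_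
  rw [stdGaussian_eq_stdGaussian_euclideanSpace]
  exact Measure.prod_setOf_apply_eq_apply_eq_zero _ _ L.measurable L.measurable
    (stdGaussian_preimage_singleton_eq_zero hL0)
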